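/- Let p ≥ 1, k ≥ 0, let x_1, …, x_ℓ be real numbers and A_1, …, A_ℓ positive semidefinite real symmetric p×p matrices, and define S_i := Σ_{j=1}^ℓ x_j^i A_j for 0 ≤ i ≤ 2k. Then the moment matrix M(k) = (S_{i+j−2})_{i,j=1}^{k+1} satisfies rank M(k) ≤ Σ_{j=1}^ℓ rank A_j. -/

import Mathlib

/-!
Each atom contributes a congruence `P A Pᵀ` of its mass, where `P` stacks the blocks
`x⁰ I, x¹ I, …, xᵏ I`: indeed `(P A Pᵀ)_{ij} = x^(i+j) A`. So the moment matrix is a sum of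
`ℓ` matrices of rank at most `rank A_j`, and the rank is subadditive.
-/

open Matrix

/-- The `k`-th truncated moment matrix of `S`: the `(i,j)`-th `p × p` block is
`S (i + j)` for `0 ≤ i, j ≤ k`. -/
def momentMatrix (p k : ℕ) (S : ℕ → Matrix (Fin p) (Fin p) ℝ) :
    Matrix (Fin (k + 1) × Fin p) (Fin (k + 1) × Fin p) ℝ :=
  fun i j => S (i.1.1 + j.1.1) i.2 j.2

namespace Matrix

variable {m n K : Type*} [Fintype n] [Field K]

theorem rank_add_le (A B : Matrix m n K) : (A + B).rank ≤ A.rank + B.rank := by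
  rw [rank, rank, rank, mulVecLin_add]
  exact (Submodule.finrank_mono (LinearMap.range_add_le _ _)).trans
    (Submodule.finrank_add_le_finrank_add_finrank _ _)

theorem rank_finsetSum_le {ι : Type*} (s : Finset ι) (A : ι → Matrix m n K) :
    (∑ j ∈ s, A j).rank ≤ ∑ j ∈ s, (A j).rank := by
  classical
  induction s using Finset.induction with
  | empty => simp
  | insert j s hj ih =>
    rw [Finset.sum_insert hj, Finset.sum_insert hj]
    exact (rank_add_le _ _).trans (by gcongr)

theorem rank_mul_mul_le {l o R : Type*} [Fintype m] [Fintype o] [CommRing R]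
    [StrongRankCondition R] (P : Matrix l m R) (A : Matrix m n R) (Q : Matrix n o R) :
    (P * A * Q).rank ≤ A.rank :=
  calc (P * A * Q).rank ≤ (A * Q).rank := by
        rw [Matrix.mul_assoc]; exact rank_mul_le_right _ _
    _ ≤ A.rank := rank_mul_le_left _ _

end Matrix

def powerBlockColumn (p k : ℕ) (x : ℝ) : Matrix (Fin (k + 1) × Fin p) (Fin p) ℝ :=
  fun i b => x ^ (i.1 : ℕ) * (1 : Matrix (Fin p) (Fin p) ℝ) i.2 b

theorem momentMatrix_sum {ι : Type*} (s : Finset ι) (p k : ℕ)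
    (S : ι → ℕ → Matrix (Fin p) (Fin p) ℝ) :
    momentMatrix p k (fun i => ∑ j ∈ s, S j i) = ∑ j ∈ s, momentMatrix p k (S j) := by
  ext a b
  simp [momentMatrix, Matrix.sum_apply]

theorem momentMatrix_pow_smul (p k : ℕ) (x : ℝ) (A : Matrix (Fin p) (Fin p) ℝ) :
    momentMatrix p k (fun i => x ^ i • A) =
      powerBlockColumn p k x * A * (powerBlockColumn p k x)ᵀ := by
  ext a b
  simp only [momentMatrix, powerBlockColumn, pow_add, Matrix.smul_apply, smul_eq_mul, mul_apply,
    one_apply, mul_ite, mul_one, mul_zero, ite_mul, zero_mul, Finset.sum_ite_eq, Finset.mem_univ,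
    if_true, transpose_apply]
  ring

theorem rank_momentMatrix_le_sum_rank_general (p k ℓ : ℕ)
    (x : Fin ℓ → ℝ) (A : Fin ℓ → Matrix (Fin p) (Fin p) ℝ) :
    (momentMatrix p k (fun i => ∑ j, x j ^ i • A j)).rank ≤ ∑ j, (A j).rank := by
  rw [momentMatrix_sum]
  refine (rank_finsetSum_le _ _).trans (Finset.sum_le_sum fun j _ => ?_)
  rw [momentMatrix_pow_smul]
  exact rank_mul_mul_le _ _ _

/-- The rank of the moment matrix of a finitely atomic positive matrix measure is at most
the sum of the ranks of its masses. -/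
theorem rank_momentMatrix_le_sum_rank (p k ℓ : ℕ) (hp : 1 ≤ p)
    (x : Fin ℓ → ℝ) (A : Fin ℓ → Matrix (Fin p) (Fin p) ℝ)
    (hA : ∀ j, (A j).PosSemidef) :
    (momentMatrix p k (fun i => ∑ j, x j ^ i • A j)).rank ≤ ∑ j, (A j).rank :=
  rank_momentMatrix_le_sum_rank_general p k ℓ x A
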